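/- arXiv:2401.12531 — 3 statements merged into one kernel-verified Lean document; each statement's English description precedes it below -/
import Mathlib

section
/- For each ordinal α ≤ ε₀, the Hardy function H_α : ℕ → ℕ defined by H₀(n) = n, H_{α+1}(n) = H_α(n+1), and H_λ(n) = H_{λ[n]}(n) for limit λ (using the canonical fundamental sequences, with ε₀[n] = ω_n(1)) is well-defined and total. -/
/-- `ε₀` is the least ordinal `α` with `ω ^ α = α`. -/
noncomputable def eps0 : Ordinal.{0} := sInf {a : Ordinal | Ordinal.omega0 ^ a = a}

/-- The tower `W n = ω_{n+1}(1)`: `W 0 = ω` and `W (n+1) = ω ^ W n`. -/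
noncomputable def W : ℕ → Ordinal.{0}
  | 0 => Ordinal.omega0
  | n + 1 => Ordinal.omega0 ^ W n

open Classical Ordinal in
/-- The canonical fundamental sequence `fund λ m = λ[m]`.  For a limit ordinal
`λ < ε₀` with Cantor normal form `λ = ω ^ α_n + ⋯ + ω ^ α₁ + ω ^ α₀ * c`
(equal exponents grouped with coefficients), the last summand `ω ^ α₀` is
replaced by `ω ^ (α₀ - 1) * m` if `α₀` is a successor, and by `ω ^ (α₀[m])` if
`α₀` is a limit.  For a successor ordinal `β + 1` we set `(β + 1)[m] = β`, and
`0[m] = 0`. -/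
noncomputable def fund : Ordinal.{0} → ℕ → Ordinal.{0} :=
  WellFounded.fix Ordinal.lt_wf fun α IH m =>
    let l := Ordinal.CNF omega0 α
    let e := (l.getLast?.map Prod.fst).getD 0
    let c := (l.getLast?.map Prod.snd).getD 0
    let γ := (l.dropLast.map (fun p => omega0 ^ p.1 * p.2)).sum + omega0 ^ e * (c - 1)
    if α = 0 then 0
    else if e = 0 then γ
    else if ∃ β, e = β + 1 then γ + omega0 ^ (Ordinal.pred e) * m
    else if he : e < α then γ + omega0 ^ (IH e he m) else 0

/-- Extended fundamental sequence, with `ε₀[n] = ω_n(1)` at `ε₀` itself. -/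
noncomputable def fundE (α : Ordinal.{0}) (n : ℕ) : Ordinal.{0} :=
  if α = eps0 then W n else fund α n

/-- Whether a function `H` satisfies the Hardy recursion equations on `α ≤ ε₀`:
`H₀(n) = n`, `H_{α+1}(n) = H_α(n+1)`, and `H_λ(n) = H_{λ[n]}(n)` for limits
`λ ≤ ε₀` (using the canonical fundamental sequences with `ε₀[n] = ω_n(1)`). -/
def IsHardy (H : Ordinal.{0} → ℕ → ℕ) : Prop :=
  (∀ n : ℕ, H 0 n = n) ∧
  (∀ α : Ordinal.{0}, α < eps0 → ∀ n : ℕ, H (α + 1) n = H α (n + 1)) ∧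
  (∀ α : Ordinal.{0}, α ≤ eps0 → Order.IsSuccLimit α → ∀ n : ℕ, H α n = H (fundE α n) n)

/-!
Every fundamental sequence descends. For `0 < α < ε₀` we have `α < ω ^ α`, so the last
exponent `e` of the Cantor normal form of `α` is below `α`; by induction on `α`, `α[m]` arises
from `α` by replacing its last summand `ω ^ e` with something smaller than `ω ^ e` (namely
`0`, `ω ^ (e - 1) * m` or `ω ^ e[m]`), whence `α[m] < α`. At `ε₀` itself, `ω_n(1) < ε₀`.
The Hardy equations therefore define `H` by well-founded recursion on `α ≤ ε₀`, and the same
descent proves by induction that any two solutions agree there.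
-/

open Ordinal Order

theorem omega0_opow_eps0 : ω ^ eps0 = eps0 :=
  csInf_mem (s := {a | ω ^ a = a}) ⟨nfp (ω ^ ·) 0, nfp_fp (isNormal_opow one_lt_omega0) 0⟩

theorem lt_omega0_opow_self_of_lt_eps0 {α : Ordinal.{0}} (h : α < eps0) : α < ω ^ α :=
  (right_le_opow α one_lt_omega0).lt_of_ne fun hα =>
    h.not_ge (csInf_le' (s := {a | ω ^ a = a}) hα.symm)

theorem one_lt_eps0 : 1 < eps0 := by
  by_contra! h
  have hfix := omega0_opow_eps0
  rcases le_one_iff.1 h with h | h <;> simp [h, one_lt_omega0.ne'] at hfix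

theorem W_lt_eps0 : ∀ n, W n < eps0
  | 0 => by
    rw [W]
    simpa only [opow_one, omega0_opow_eps0] using
      (opow_lt_opow_iff_right one_lt_omega0).2 one_lt_eps0
  | n + 1 => by
    rw [W]
    simpa only [omega0_opow_eps0] using (opow_lt_opow_iff_right one_lt_omega0).2 (W_lt_eps0 n)

noncomputable def cnfLastExp (α : Ordinal.{0}) : Ordinal.{0} :=
  ((CNF ω α).getLast?.map Prod.fst).getD 0

noncomputable def cnfLastCoeff (α : Ordinal.{0}) : Ordinal.{0} :=
  ((CNF ω α).getLast?.map Prod.snd).getD 0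

noncomputable def cnfPrefix (α : Ordinal.{0}) : Ordinal.{0} :=
  ((CNF ω α).dropLast.map fun p => ω ^ p.1 * p.2).sum + ω ^ cnfLastExp α * (cnfLastCoeff α - 1)

theorem List.foldr_add_eq_sum_map_add {ι M : Type*} [AddMonoid M] (f : ι → M) (l : List ι)
    (x : M) : l.foldr (fun i r => f i + r) x = (l.map f).sum + x := by
  induction l with
  | nil => simp
  | cons i l ih => simp [ih, add_assoc]

theorem cnfPrefix_add_omega0_opow_cnfLastExp {α : Ordinal.{0}} (hα : α ≠ 0) :
    cnfPrefix α + ω ^ cnfLastExp α = α := by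
  obtain ⟨L, ⟨e, c⟩, hL⟩ := ((CNF ω α).eq_nil_or_concat'.resolve_left
    (by simp [CNF.ne_zero hα]))
  have hmem : (e, c) ∈ CNF ω α := by simp [hL]
  obtain ⟨k, rfl⟩ := lt_omega0.1 (CNF.snd_lt one_lt_omega0 hmem)
  have hk : k ≠ 0 := by rintro rfl; simpa using CNF.snd_pos hmem
  have hlast : ω ^ e * ((k : Ordinal) - 1) + ω ^ e = ω ^ e * k := by
    rw [show (k : Ordinal) - 1 = ((k - 1 : ℕ) : Ordinal) by rw [natCast_sub, Nat.cast_one],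
      ← mul_add_one, ← Nat.cast_add_one, Nat.sub_add_cancel (by omega)]
  have hsum := CNF.foldr ω α
  rw [hL, List.foldr_append, List.foldr_cons, List.foldr_nil, add_zero,
    List.foldr_add_eq_sum_map_add (fun p : Ordinal × Ordinal => ω ^ p.1 * p.2)] at hsum
  simpa [cnfPrefix, cnfLastExp, cnfLastCoeff, hL, add_assoc, hlast] using hsum

theorem cnfLastExp_lt {α : Ordinal.{0}} (h0 : α ≠ 0) (hα : α < eps0) : cnfLastExp α < α := by
  have hle : ω ^ cnfLastExp α ≤ α := by
    conv_rhs => rw [← cnfPrefix_add_omega0_opow_cnfLastExp h0]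
    exact le_add_self
  exact (opow_lt_opow_iff_right one_lt_omega0).1 (hle.trans_lt (lt_omega0_opow_self_of_lt_eps0 hα))

open Classical in
theorem fund_eq (α : Ordinal.{0}) (m : ℕ) :
    fund α m =
      if α = 0 then 0
      else if cnfLastExp α = 0 then cnfPrefix α
      else if ∃ β, cnfLastExp α = β + 1 then cnfPrefix α + ω ^ pred (cnfLastExp α) * m
      else if cnfLastExp α < α then cnfPrefix α + ω ^ fund (cnfLastExp α) m else 0 := by
  rw [fund, WellFounded.fix_eq]
  rfl

theorem fund_lt {α : Ordinal.{0}} (h0 : α ≠ 0) (hα : α < eps0) (m : ℕ) : fund α m < α := by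
  induction α using WellFoundedLT.induction with
  | _ α IH =>
    suffices ∃ x < ω ^ cnfLastExp α, fund α m = cnfPrefix α + x by
      obtain ⟨x, hx, hfund⟩ := this
      rw [hfund]
      exact (add_lt_add_right hx _).trans_eq (cnfPrefix_add_omega0_opow_cnfLastExp h0)
    rw [fund_eq, if_neg h0]
    split_ifs with he hsucc hlt
    · exact ⟨0, opow_pos _ omega0_pos, (add_zero _).symm⟩
    · obtain ⟨β, hβ⟩ := hsucc
      refine ⟨_, ?_, rfl⟩
      rw [hβ, pred_add_one, opow_add_one]
      exact mul_lt_mul_of_pos_left (natCast_lt_omega0 m) (opow_pos β omega0_pos)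
    · exact ⟨_, (opow_lt_opow_iff_right one_lt_omega0).2 (IH _ hlt he (hlt.trans hα)), rfl⟩
    · exact absurd (cnfLastExp_lt h0 hα) hlt

theorem fundE_lt {α : Ordinal.{0}} (h0 : α ≠ 0) (hα : α ≤ eps0) (n : ℕ) : fundE α n < α := by
  rw [fundE]
  split_ifs with he
  · exact he ▸ W_lt_eps0 n
  · exact fund_lt h0 (hα.lt_of_ne he) n

-- The fallback `0` is reached only at limits above `ε₀`.
noncomputable def hardy (α : Ordinal.{0}) : ℕ → ℕ :=
  limitRecOn (motive := fun _ => ℕ → ℕ) α id (fun _ H n => H (n + 1))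
    fun α _ H n => if h : fundE α n < α then H _ h n else 0

theorem hardy_zero (n : ℕ) : hardy 0 n = n := by
  simp [hardy]

theorem hardy_add_one (α : Ordinal.{0}) (n : ℕ) : hardy (α + 1) n = hardy α (n + 1) := by
  simp [hardy]

theorem hardy_of_isSuccLimit {α : Ordinal.{0}} (hα : α ≤ eps0) (hl : IsSuccLimit α) (n : ℕ) :
    hardy α n = hardy (fundE α n) n := by
  rw [hardy, limitRecOn_limit _ _ _ _ hl, dif_pos (fundE_lt hl.ne_bot hα n)]
  rfl

theorem isHardy_hardy : IsHardy hardy :=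
  ⟨hardy_zero, fun α _ => hardy_add_one α, fun _ hα hl => hardy_of_isSuccLimit hα hl⟩

theorem IsHardy.eq {H H' : Ordinal.{0} → ℕ → ℕ} (hH : IsHardy H) (hH' : IsHardy H')
    {α : Ordinal.{0}} (hα : α ≤ eps0) : H α = H' α := by
  induction α using limitRecOn with
  | zero => funext n; rw [hH.1, hH'.1]
  | add_one β ih =>
    have hβ : β < eps0 := add_one_le_iff.1 hα
    funext n
    rw [hH.2.1 β hβ, hH'.2.1 β hβ, ih hβ.le]
  | limit α hl ih =>
    funext n
    have hlt := fundE_lt hl.ne_bot hα n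
    rw [hH.2.2 α hα hl, hH'.2.2 α hα hl, ih _ hlt (hlt.le.trans hα)]

/-- The Hardy function `H_α : ℕ → ℕ` for `α ≤ ε₀` is well-defined and total:
there is a (total) function satisfying the Hardy recursion equations, and any
two such functions agree at every `α ≤ ε₀`. -/
theorem hardy_wellDefined_total :
    ∃ H : Ordinal.{0} → ℕ → ℕ, IsHardy H ∧
      ∀ H' : Ordinal.{0} → ℕ → ℕ, IsHardy H' →
        ∀ α : Ordinal.{0}, α ≤ eps0 → ∀ n : ℕ, H α n = H' α n :=
  ⟨hardy, isHardy_hardy, fun _ hH' _ hα n => congrFun (isHardy_hardy.eq hH' hα) n⟩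
end

section
/- The Paris–Harrington principle is true: for all a₁, b, c, d ∈ ℕ there exists a₂ ∈ ℕ such that for every function F mapping the c-element subsets of the interval [a₁, a₂] into {1,…,d}, there is a set X ⊆ [a₁, a₂] homogeneous for F with |X| ≥ b and |X| ≥ min(X). -/
open Classical in
/-- Infinite Ramsey theorem on subsets of ℕ. -/
lemma inf_ramsey : ∀ (c d : ℕ) (F : Finset ℕ → ℕ), (∀ s : Finset ℕ, s.card = c → F s < d) →
    ∀ S : Set ℕ, S.Infinite →
    ∃ Y ⊆ S, Y.Infinite ∧ ∃ k < d, ∀ s : Finset ℕ, ↑s ⊆ Y → s.card = c → F s = k := by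
  intro c
  induction c with
  | zero =>
    intro d F hF S hS
    exact ⟨S, le_refl _, hS, F ∅, hF ∅ rfl, fun s hs hc => by
      rw [Finset.card_eq_zero.mp hc]⟩
  | succ c ih =>
    intro d F hF S hS
    have hd : 0 < d := lt_of_le_of_lt (Nat.zero_le _) (hF (Finset.range (c+1)) (by simp))
    -- one step of the construction
    have key : ∀ T : Set ℕ, T.Infinite → ∃ p : ℕ × Set ℕ × ℕ, p.1 ∈ T ∧ p.2.1 ⊆ T ∧
        p.2.1.Infinite ∧ (∀ y ∈ p.2.1, p.1 < y) ∧ p.2.2 < d ∧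
        ∀ t : Finset ℕ, ↑t ⊆ p.2.1 → t.card = c → F (insert p.1 t) = p.2.2 := by
      intro T hT
      obtain ⟨x, hx⟩ := hT.nonempty
      set G : Finset ℕ → ℕ := fun t => if x ∈ t then 0 else F (insert x t) with hGdef
      have hG : ∀ t : Finset ℕ, t.card = c → G t < d := by
        intro t ht
        by_cases hxt : x ∈ t
        · simp [hGdef, hxt, hd]
        · simp only [hGdef, if_neg hxt]
          exact hF _ (by rw [Finset.card_insert_of_notMem hxt, ht])
      obtain ⟨Y, hYT, hYinf, k, hk, hhom⟩ := ih d G hG (T \ Set.Iic x) (hT.diff (Set.finite_Iic x))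
      refine ⟨⟨x, Y, k⟩, hx, fun y hy => (hYT hy).1, hYinf, fun y hy => ?_, hk, ?_⟩
      · exact lt_of_not_ge fun h => (hYT hy).2 h
      · intro t ht htc
        have hxt : x ∉ t := fun h => (hYT (ht h)).2 (le_refl x)
        have := hhom t ht htc
        simpa [hGdef, if_neg hxt] using this
    -- iterate
    let step : {T : Set ℕ // T.Infinite} → {T : Set ℕ // T.Infinite} :=
      fun T => ⟨(key T.1 T.2).choose.2.1, ((key T.1 T.2).choose_spec).2.2.1⟩
    let seq : ℕ → {T : Set ℕ // T.Infinite} := fun n => Nat.rec ⟨S, hS⟩ (fun _ p => step p) n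
    let x : ℕ → ℕ := fun n => (key (seq n).1 (seq n).2).choose.1
    let k : ℕ → ℕ := fun n => (key (seq n).1 (seq n).2).choose.2.2
    have hseq : ∀ n, seq (n+1) = step (seq n) := fun n => rfl
    have spec := fun n => (key (seq n).1 (seq n).2).choose_spec
    have hxmem : ∀ n, x n ∈ (seq n).1 := fun n => (spec n).1
    have hsub : ∀ n, (seq (n+1)).1 ⊆ (seq n).1 := fun n => (spec n).2.1
    have hgt : ∀ n, ∀ y ∈ (seq (n+1)).1, x n < y := fun n => (spec n).2.2.2.1
    have hkd : ∀ n, k n < d := fun n => (spec n).2.2.2.2.1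
    have hhom : ∀ n, ∀ t : Finset ℕ, ↑t ⊆ (seq (n+1)).1 → t.card = c →
        F (insert (x n) t) = k n := fun n => (spec n).2.2.2.2.2
    have hanti : ∀ n m, n ≤ m → (seq m).1 ⊆ (seq n).1 := by
      intro n
      exact Nat.le_induction (le_refl _) (fun m hm ih2 => (hsub m).trans ih2)
    have hmono : StrictMono x := by
      have h1 : ∀ n m, n < m → x n < x m := fun n m h =>
        hgt n (x m) (hanti (n+1) m h (hxmem m))
      exact fun n m h => h1 n m h
    -- pigeonhole on colors
    obtain ⟨j, hj⟩ := Finite.exists_infinite_fiber (fun n => (⟨k n, hkd n⟩ : Fin d))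
    rw [Set.infinite_coe_iff] at hj
    refine ⟨x '' ((fun n => (⟨k n, hkd n⟩ : Fin d)) ⁻¹' {j}), ?_, ?_, j.1, j.2, ?_⟩
    · rintro y ⟨n, _, rfl⟩
      exact hanti 0 n (Nat.zero_le n) (hxmem n)
    · exact hj.image (hmono.injective.injOn)
    · intro s hs hsc
      have hne : s.Nonempty := Finset.card_pos.mp (by omega)
      set y₀ := s.min' hne with hy₀
      obtain ⟨i0, hi0A, hi0⟩ := hs (s.min'_mem hne)
      set t := s.erase y₀ with ht
      have htc : t.card = c := by rw [ht, Finset.card_erase_of_mem (s.min'_mem hne), hsc]; omega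
      have htsub : ↑t ⊆ (seq (i0+1)).1 := by
        intro y hy
        have hys : y ∈ s := Finset.mem_of_mem_erase hy
        have hyne : y ≠ y₀ := Finset.ne_of_mem_erase hy
        obtain ⟨m, hmA, hm⟩ := hs hys
        have : x i0 < x m := by
          rw [hi0, hm]
          exact lt_of_le_of_ne (s.min'_le y hys) (Ne.symm hyne)
        have him : i0 < m := hmono.lt_iff_lt.mp this
        exact hanti (i0+1) m him (hm ▸ hxmem m)
      have hx0t : x i0 ∉ t := by
        rw [hi0]; exact Finset.notMem_erase _ _
      have : F (insert (x i0) t) = k i0 := hhom i0 t htsub htc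
      have hins : insert (x i0) t = s := by
        rw [hi0, ht]; exact Finset.insert_erase (s.min'_mem hne)
      rw [← hins, this]
      have : (⟨k i0, hkd i0⟩ : Fin d) = j := hi0A
      exact congrArg Fin.val this

open Classical in
/-- Limit coloring along the hyperfilter. -/
lemma exists_uniform (a₁ c d : ℕ) (hd : 0 < d) (Fm : ℕ → Finset ℕ → ℕ)
    (hFm : ∀ m, ∀ s : Finset ℕ, s ⊆ Finset.Icc a₁ m → s.card = c → Fm m s ∈ Finset.Icc 1 d) :
    ∃ G : Finset ℕ → ℕ, (∀ s : Finset ℕ, s.card = c → G s < d + 1) ∧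
      ∀ s : Finset ℕ, s.card = c → (∀ y ∈ s, a₁ ≤ y) →
        G s ∈ Finset.Icc 1 d ∧ {m | Fm m s = G s} ∈ (Filter.hyperfilter ℕ : Ultrafilter ℕ) := by
  set U : Ultrafilter ℕ := Filter.hyperfilter ℕ with hU
  have key : ∀ s : Finset ℕ, s.card = c → (∀ y ∈ s, a₁ ≤ y) →
      ∃ k, k ∈ Finset.Icc 1 d ∧ {m | Fm m s = k} ∈ U := by
    intro s hsc hsa
    have hIci : Set.Ici (s.sup id) ∈ U := by
      refine Filter.hyperfilter_le_cofinite ?_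
      rw [Filter.mem_cofinite]
      simpa using Set.finite_Iio (s.sup id)
    have hsubset : Set.Ici (s.sup id) ⊆ ⋃ k ∈ (↑(Finset.Icc 1 d) : Set ℕ), {m | Fm m s = k} := by
      intro m hm
      have hs : s ⊆ Finset.Icc a₁ m := by
        intro y hy
        exact Finset.mem_Icc.mpr ⟨hsa y hy, le_trans (Finset.le_sup (f := id) hy) hm⟩
      have := hFm m s hs hsc
      simp only [Set.mem_iUnion, Set.mem_setOf_eq]
      exact ⟨Fm m s, by simpa using this, rfl⟩
    have hU2 : (⋃ k ∈ (↑(Finset.Icc 1 d) : Set ℕ), {m | Fm m s = k}) ∈ U :=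
      Filter.mem_of_superset hIci hsubset
    obtain ⟨k, hk1, hk2⟩ := (Ultrafilter.finite_biUnion_mem_iff (Finset.Icc 1 d).finite_toSet).mp hU2
    exact ⟨k, by simpa using hk1, hk2⟩
  refine ⟨fun s => if h : ∃ k, k ∈ Finset.Icc 1 d ∧ {m | Fm m s = k} ∈ U then h.choose else 1,
    ?_, ?_⟩
  · intro s hsc
    by_cases h : ∃ k, k ∈ Finset.Icc 1 d ∧ {m | Fm m s = k} ∈ U
    · simp only [dif_pos h]
      have := h.choose_spec.1
      rw [Finset.mem_Icc] at this
      omega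
    · simp only [dif_neg h]; omega
  · intro s hsc hsa
    have h := key s hsc hsa
    simp only [dif_pos h]
    exact ⟨h.choose_spec.1, h.choose_spec.2⟩

/-- The Paris–Harrington principle: for all `a₁, b, c, d` there exists `a₂`
such that for every coloring `F` of the `c`-element subsets of the interval
`[a₁, a₂]` with colors in `{1, …, d}`, there is a homogeneous `X ⊆ [a₁, a₂]`
with `|X| ≥ b` and `|X| ≥ min X`. -/
theorem paris_harrington (a₁ b c d : ℕ) :
    ∃ a₂ : ℕ, ∀ F : Finset ℕ → ℕ,
      (∀ s : Finset ℕ, s ⊆ Finset.Icc a₁ a₂ → s.card = c → F s ∈ Finset.Icc 1 d) →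
      ∃ X : Finset ℕ, X ⊆ Finset.Icc a₁ a₂ ∧
        (∃ k : ℕ, ∀ s : Finset ℕ, s ⊆ X → s.card = c → F s = k) ∧
        b ≤ X.card ∧
        ∀ hX : X.Nonempty, X.min' hX ≤ X.card := by
  rcases Nat.eq_zero_or_pos d with rfl | hd
  · -- d = 0 : the hypothesis on F is contradictory
    refine ⟨a₁ + c, fun F hF => ?_⟩
    exfalso
    obtain ⟨t, hts, htc⟩ := Finset.exists_subset_card_eq
      (s := Finset.Icc a₁ (a₁ + c)) (n := c) (by rw [Nat.card_Icc]; omega)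
    have := hF t hts htc
    simp at this
  by_contra hcon
  push_neg at hcon
  choose Fm hFm hbad using hcon
  obtain ⟨G, hG, hGspec⟩ := exists_uniform a₁ c d hd Fm hFm
  obtain ⟨Y, hYS, hYinf, k, hk, hhom⟩ := inf_ramsey c (d+1) G hG (Set.Ici a₁) (Set.Ici_infinite a₁)
  obtain ⟨y₀, hy₀⟩ := hYinf.nonempty
  set n := max b y₀ with hn
  obtain ⟨T, hTsub, hTcard⟩ := (hYinf.diff (Set.finite_Iic y₀)).exists_subset_card_eq n
  set X : Finset ℕ := insert y₀ T with hX
  have hy₀T : y₀ ∉ T := fun h => (hTsub h).2 (le_refl y₀)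
  have hXcard : X.card = n + 1 := by rw [hX, Finset.card_insert_of_notMem hy₀T, hTcard]
  have hXY : ↑X ⊆ Y := by
    intro y hy
    rcases Finset.mem_insert.mp hy with rfl | hyT
    · exact hy₀
    · exact (hTsub hyT).1
  have hXa : ∀ y ∈ X, a₁ ≤ y := fun y hy => hYS (hXY hy)
  -- pick a good m
  set 𝒮 : Finset (Finset ℕ) := X.powerset.filter fun s => s.card = c with h𝒮
  have hB : ((Set.Ici (X.sup id)) ∩ ⋂ s ∈ (↑𝒮 : Set (Finset ℕ)), {m | Fm m s = G s}) ∈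
      (Filter.hyperfilter ℕ : Ultrafilter ℕ) := by
    refine Filter.inter_mem ?_ ?_
    · refine Filter.hyperfilter_le_cofinite ?_
      rw [Filter.mem_cofinite]
      simpa using Set.finite_Iio (X.sup id)
    · refine (Filter.biInter_mem 𝒮.finite_toSet).mpr ?_
      intro s hs
      rw [Finset.mem_coe, h𝒮, Finset.mem_filter, Finset.mem_powerset] at hs
      exact (hGspec s hs.2 (fun y hy => hXa y (hs.1 hy))).2
  obtain ⟨m, hmIci, hmAgree⟩ := Ultrafilter.nonempty_of_mem hB
  rw [Set.mem_iInter₂] at hmAgree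
  have hXIcc : X ⊆ Finset.Icc a₁ m := fun y hy =>
    Finset.mem_Icc.mpr ⟨hXa y hy, le_trans (Finset.le_sup (f := id) hy) hmIci⟩
  have hhomX : ∀ s : Finset ℕ, s ⊆ X → s.card = c → Fm m s = k := by
    intro s hsX hsc
    have hs𝒮 : s ∈ 𝒮 := by
      rw [h𝒮, Finset.mem_filter, Finset.mem_powerset]; exact ⟨hsX, hsc⟩
    have h1 : Fm m s = G s := hmAgree s (by exact_mod_cast hs𝒮)
    have h2 : G s = k := hhom s (fun y hy => hXY (hsX hy)) hsc
    rw [h1, h2]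
  obtain ⟨hne, hlt⟩ := hbad m X hXIcc ⟨k, hhomX⟩ (by rw [hXcard]; omega)
  have : X.min' hne ≤ y₀ := Finset.min'_le X y₀ (Finset.mem_insert_self y₀ T)
  rw [hXcard] at hlt
  omega
end

section
/- Finite Kruskal-type theorem from infinite Kruskal's theorem via compactness: if for every infinite sequence ⟨T_i : i ∈ ω⟩ of finite trees there exist i < j with an infimum-preserving embedding T_i ≼ T_j, then for every k there exists N such that every finite sequence ⟨T_i : 1 ≤ i ≤ N⟩ of finite trees with |T_i| ≤ k + i for all i ≤ N contains indices i < j ≤ N with T_i ≼ T_j. -/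
/-- A finite tree: a partial order on `Fin n` with a least element (root) in
which the set of predecessors of every point is linearly ordered.  `n` is the
number of nodes. -/
structure FinTree where
  n : ℕ
  le : Fin n → Fin n → Prop
  refl : ∀ x, le x x
  antisymm : ∀ x y, le x y → le y x → x = y
  trans : ∀ x y z, le x y → le y z → le x z
  root : Fin n
  root_le : ∀ x, le root x
  pred_linear : ∀ x y z, le y x → le z x → (le y z ∨ le z y)

/-- `z` is the infimum of `x` and `y` in the tree `T`. -/
def FinTree.IsInf (T : FinTree) (x y z : Fin T.n) : Prop :=
  T.le z x ∧ T.le z y ∧ ∀ w, T.le w x → T.le w y → T.le w z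

/-- `T ≼ T'`: there is an infimum-preserving order embedding of `T` into
`T'`. -/
def FinTree.Emb (T T' : FinTree) : Prop :=
  ∃ f : Fin T.n → Fin T'.n, Function.Injective f ∧
    (∀ a b, T.le a b ↔ T'.le (f a) (f b)) ∧
    (∀ x y z, T.IsInf x y z → T'.IsInf (f x) (f y) (f z))

private noncomputable def treeCode (m : ℕ) (T : {T : FinTree // T.n ≤ m}) :
    Σ n : Fin (m + 1), Fin n → Fin n → Bool :=
  ⟨⟨T.1.n, Nat.lt_succ_of_le T.2⟩,
    fun a b => @decide (T.1.le a b) (Classical.propDecidable _)⟩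

private lemma treeCode_inj (m : ℕ) : Function.Injective (treeCode m) := by
  rintro ⟨⟨n, le, rf, an, tr, rt, rl, pl⟩, hT⟩ ⟨⟨n', le', rf', an', tr', rt', rl', pl'⟩, hU⟩ h
  simp only [treeCode, Sigma.mk.inj_iff, Fin.mk.injEq] at h
  obtain ⟨h1, h2⟩ := h
  subst h1
  rw [heq_iff_eq] at h2
  have hle : le = le' := by
    funext a b
    exact propext (decide_eq_decide.mp (congrFun (congrFun h2 a) b))
  subst hle
  have hrt : rt = rt' := an rt rt' (rl rt') (rl' rt)
  subst hrt
  rfl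

private instance finTreeFinite (m : ℕ) : Finite {T : FinTree // T.n ≤ m} :=
  Finite.of_injective _ (treeCode_inj m)

/-- Finite Kruskal-type theorem from the infinite Kruskal theorem via
compactness: if every infinite sequence of finite trees contains `i < j` with
`T_i ≼ T_j`, then for every `k` there is `N` such that every sequence
`⟨T_i : 1 ≤ i ≤ N⟩` of finite trees with `|T_i| ≤ k + i` contains
`i < j ≤ N` with `T_i ≼ T_j`. -/
theorem finite_kruskal_of_infinite_kruskal
    (H : ∀ T : ℕ → FinTree, ∃ i j, i < j ∧ FinTree.Emb (T i) (T j)) :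
    ∀ k : ℕ, ∃ N : ℕ, ∀ T : ℕ → FinTree,
      (∀ i, 1 ≤ i → i ≤ N → (T i).n ≤ k + i) →
      ∃ i j, 1 ≤ i ∧ i < j ∧ j ≤ N ∧ FinTree.Emb (T i) (T j) := by
  intro k
  by_contra hcon
  push_neg at hcon
  -- choose bad sequences of every length
  choose W hW1 hW2 using hcon
  -- pigeonhole step
  have step : ∀ (S : Set ℕ), S.Infinite → ∀ i : ℕ, 1 ≤ i →
      ∃ (t : FinTree) (S' : Set ℕ), S' ⊆ S ∧ S'.Infinite ∧
        ∀ M ∈ S', i ≤ M ∧ W M i = t := by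
    intro S hS i hi
    have hS0 : (S \ Set.Iio i).Infinite := hS.diff (Set.finite_Iio i)
    haveI : Infinite ↥(S \ Set.Iio i) := hS0.to_subtype
    set f : ↥(S \ Set.Iio i) → {T : FinTree // T.n ≤ k + i} :=
      fun M => ⟨W M.1 i, hW1 M.1 i hi (not_lt.mp M.2.2)⟩ with hf
    obtain ⟨y, hy⟩ := Finite.exists_infinite_fiber f
    refine ⟨y.1, {M | M ∈ S \ Set.Iio i ∧ W M i = y.1}, fun M hM => hM.1.1, ?_, ?_⟩
    · rw [Set.infinite_coe_iff] at hy
      -- hy : (f ⁻¹' {y}).Infinite  as a set in the subtype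
      have : Set.MapsTo (fun M : ↥(S \ Set.Iio i) => M.1) (f ⁻¹' {y})
          {M | M ∈ S \ Set.Iio i ∧ W M i = y.1} := by
        intro M hM
        exact ⟨M.2, congrArg Subtype.val hM⟩
      exact Set.Infinite.mono (Set.image_subset_iff.mpr this)
        (hy.image (Subtype.val_injective.injOn))
    · intro M hM
      exact ⟨not_lt.mp hM.1.2, hM.2⟩
  choose t! S! hsub hinf hprop using step
  -- König-style recursion
  let D : ℕ → {S : Set ℕ // S.Infinite} := fun j =>
    Nat.rec ⟨Set.univ, Set.infinite_univ⟩
      (fun j ih => ⟨S! ih.1 ih.2 (j + 1) j.succ_pos,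
        hinf ih.1 ih.2 (j + 1) j.succ_pos⟩) j
  let g : ℕ → FinTree := fun j => t! (D j).1 (D j).2 (j + 1) j.succ_pos
  have hDsucc : ∀ j, (D (j + 1)).1 = S! (D j).1 (D j).2 (j + 1) j.succ_pos := fun j => rfl
  have hchain : ∀ a b, a ≤ b → (D b).1 ⊆ (D a).1 := by
    intro a b hab
    induction b with
    | zero => have : a = 0 := Nat.le_zero.mp hab; subst this; exact subset_rfl
    | succ b ih =>
      rcases Nat.lt_or_ge a (b + 1) with h | h
      · exact (hsub (D b).1 (D b).2 (b + 1) b.succ_pos).trans (ih (Nat.lt_succ_iff.mp h))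
      · have : a = b + 1 := le_antisymm hab h
        subst this; exact subset_rfl
  have key : ∀ j M, M ∈ (D (j + 1)).1 → (j + 1) ≤ M ∧ W M (j + 1) = g j := by
    intro j M hM
    exact hprop (D j).1 (D j).2 (j + 1) j.succ_pos M hM
  -- g is a bad infinite sequence
  obtain ⟨i, j, hij, hemb⟩ := H g
  obtain ⟨M, hM⟩ := (D (j + 1)).2.nonempty
  have hMj := key j M hM
  have hMi := key i M (hchain (i + 1) (j + 1) (Nat.succ_le_succ hij.le) hM)
  have := hW2 M (i + 1) (j + 1) i.succ_pos (Nat.succ_lt_succ hij) hMj.1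
  rw [hMi.2, hMj.2] at this
  exact this hemb
end
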